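/- arXiv:2512.13146 — 2 statements merged into one kernel-verified Lean document; each statement's English description precedes it below -/
import Mathlib

section
/- Let n_max ∈ ℕ, let N be an even integer with n_max < N ≤ 2·n_max, take the uniform phases θ_k = 2πk/N (k = 0,…,N−1), and let x_1 < … < x_{M+1} be arbitrary bin edges with bins I_i = [x_i, x_{i+1}). For α ∈ ℝ and β ∈ ℂ, define v_β ∈ ℂ^{n_max+1} by (v_β)_0 = α, (v_β)_{N/2} = β, and (v_β)_j = 0 otherwise, and set ρ_β = v_β v_β†. Then Tr(ρ_β · Π(I_i, θ_k)) = Tr(ρ_{β̄} · Π(I_i, θ_k)) for all i ∈ {1,…,M} and k ∈ {0,…,N−1}. In particular, if α ≠ 0 and Im β ≠ 0, then ρ_β ≠ ρ_{β̄} and the family {Π(I_i, θ_k)} does not span M_{n_max+1}(ℂ). -/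
/-- The `n`-th physicists' Hermite polynomial (as a function),
`H_n(x) = (−1)^n e^{x²} (d/dx)^n e^{−x²}`. -/
noncomputable def physHermite (n : ℕ) (x : ℝ) : ℝ :=
  (-1 : ℝ) ^ n * Real.exp (x ^ 2) * iteratedDeriv n (fun y => Real.exp (-y ^ 2)) x

/-- The normalized Hermite overlap integral
`(2^{m+n} m! n! π)^{−1/2} ∫_u^v H_m(x) H_n(x) e^{−x²} dx`. -/
noncomputable def hermOverlap (m n : ℕ) (u v : ℝ) : ℝ :=
  (Real.sqrt (2 ^ (m + n) * m.factorial * n.factorial * Real.pi))⁻¹ *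
    ∫ x in u..v, physHermite m x * physHermite n x * Real.exp (-x ^ 2)

/-- The truncated homodyne POVM matrix `Π([u,v), θ)` for photon-number cutoff `nmax`:
`Π(I,θ)_{m,n} = e^{i(m−n)θ} (2^{m+n} m! n! π)^{−1/2} ∫_u^v H_m H_n e^{−x²}`. -/
noncomputable def homPOVM (nmax : ℕ) (u v θ : ℝ) :
    Matrix (Fin (nmax + 1)) (Fin (nmax + 1)) ℂ :=
  Matrix.of fun m n =>
    Complex.exp (Complex.I * (((m : ℕ) : ℂ) - ((n : ℕ) : ℂ)) * (θ : ℂ)) *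
      (hermOverlap m n u v : ℂ)


/-- The vector `v ∈ ℂ^{n_max+1}` with `v_0 = α`, `v_t = β`, and all other entries `0`. -/
noncomputable def twoLevelVec (nmax t : ℕ) (α : ℝ) (β : ℂ) : Fin (nmax + 1) → ℂ :=
  fun j => if (j : ℕ) = 0 then (α : ℂ) else if (j : ℕ) = t then β else 0

/-- The rank-one outer product `ρ = v v†` built from `twoLevelVec`. -/
noncomputable def twoLevelOuter (nmax t : ℕ) (α : ℝ) (β : ℂ) :
    Matrix (Fin (nmax + 1)) (Fin (nmax + 1)) ℂ :=
  Matrix.vecMulVec (twoLevelVec nmax t α β) (fun q => starRingEnd ℂ (twoLevelVec nmax t α β q))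

lemma hermOverlap_comm (m n : ℕ) (u v : ℝ) :
    hermOverlap m n u v = hermOverlap n m u v := by
  unfold hermOverlap
  have h1 : (2:ℝ) ^ (m + n) * m.factorial * n.factorial * Real.pi
      = 2 ^ (n + m) * n.factorial * m.factorial * Real.pi := by
    rw [add_comm m n]; ring
  rw [h1]
  congr 1
  apply intervalIntegral.integral_congr
  intro y _
  ring

lemma trace_twoLevelOuter_mul {nmax : ℕ} (t : ℕ) (ht : t < nmax + 1) (ht0 : t ≠ 0)
    (α : ℝ) (β : ℂ) (A : Matrix (Fin (nmax + 1)) (Fin (nmax + 1)) ℂ) :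
    (twoLevelOuter nmax t α β * A).trace =
      (α : ℂ) * (α : ℂ) * A 0 0 + (α : ℂ) * (starRingEnd ℂ β) * A ⟨t, ht⟩ 0 +
      β * (α : ℂ) * A 0 ⟨t, ht⟩ + β * (starRingEnd ℂ β) * A ⟨t, ht⟩ ⟨t, ht⟩ := by
  classical
  set v := twoLevelVec nmax t α β with hv
  set it : Fin (nmax + 1) := ⟨t, ht⟩ with hit
  have hne : (0 : Fin (nmax + 1)) ≠ it := by
    intro h
    have := congrArg Fin.val h
    simp [hit] at this
    exact ht0 this.symm
  have hv0 : v 0 = (α : ℂ) := by simp [hv, twoLevelVec]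
  have hvt : v it = β := by simp [hv, twoLevelVec, hit, ht0]
  have hvz : ∀ j : Fin (nmax + 1), j ≠ 0 → j ≠ it → v j = 0 := by
    intro j hj0 hjt
    simp only [hv, twoLevelVec]
    rw [if_neg (fun h => hj0 (Fin.ext (by simpa using h))),
      if_neg (fun h => hjt (Fin.ext (by simpa [hit] using h)))]
  have hinner : ∀ p : Fin (nmax + 1),
      (twoLevelOuter nmax t α β * A) p p
        = v p * (starRingEnd ℂ (v 0) * A 0 p + starRingEnd ℂ (v it) * A it p) := by
    intro p
    rw [Matrix.mul_apply]
    simp only [twoLevelOuter, Matrix.vecMulVec_apply, ← hv]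
    rw [Fintype.sum_eq_add (0 : Fin (nmax + 1)) it hne
      (f := fun q => v p * starRingEnd ℂ (v q) * A q p)
      (by rintro q ⟨h0, ht'⟩; simp [hvz q h0 ht'])]
    ring
  rw [Matrix.trace]
  rw [Fintype.sum_eq_add (0 : Fin (nmax + 1)) it hne
    (f := fun p => (twoLevelOuter nmax t α β * A).diag p)
    (by intro p ⟨h0, ht'⟩
        simp only [Matrix.diag_apply, hinner p, hvz p h0 ht', zero_mul])]
  simp only [Matrix.diag_apply, hinner, hv0, hvt]
  have : starRingEnd ℂ (α : ℂ) = (α : ℂ) := Complex.conj_ofReal α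
  rw [this]
  ring

/-- For even `N` with `n_max < N ≤ 2 n_max`, uniform phases `θ_k = 2πk/N`
and arbitrary bins `I_i = [x_i, x_{i+1})`, the states `ρ_β = v_β v_β†` (with `(v_β)_0 = α`,
`(v_β)_{N/2} = β`) and `ρ_{β̄}` give identical outcome probabilities `Tr(ρ Π(I_i, θ_k))`.
In particular, if `α ≠ 0` and `Im β ≠ 0` then `ρ_β ≠ ρ_{β̄}` and the POVM family does not
span `M_{n_max+1}(ℂ)`. -/
theorem homPOVM_not_complete_of_even_N (nmax N M : ℕ)
    (hNeven : Even N) (hN1 : nmax < N) (hN2 : N ≤ 2 * nmax)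
    (x : Fin (M + 1) → ℝ) (hx : StrictMono x) (α : ℝ) (β : ℂ) :
    (∀ (i : Fin M) (k : Fin N),
      (twoLevelOuter nmax (N / 2) α β *
          homPOVM nmax (x i.castSucc) (x i.succ) (2 * Real.pi * (k : ℕ) / N)).trace =
      (twoLevelOuter nmax (N / 2) α (starRingEnd ℂ β) *
          homPOVM nmax (x i.castSucc) (x i.succ) (2 * Real.pi * (k : ℕ) / N)).trace) ∧
    (α ≠ 0 → β.im ≠ 0 →
      twoLevelOuter nmax (N / 2) α β ≠ twoLevelOuter nmax (N / 2) α (starRingEnd ℂ β) ∧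
      Submodule.span ℂ
        (Set.range fun p : Fin M × Fin N =>
          homPOVM nmax (x p.1.castSucc) (x p.1.succ)
            (2 * Real.pi * (p.2 : ℕ) / N)) ≠ ⊤) := by
  classical
  set t : ℕ := N / 2 with htdef
  have h2t : 2 * t = N := by
    obtain ⟨r, hr⟩ := hNeven
    omega
  have ht0 : t ≠ 0 := by omega
  have ht : t < nmax + 1 := by omega
  have hNne : (N : ℝ) ≠ 0 := Nat.cast_ne_zero.mpr (by omega)
  set it : Fin (nmax + 1) := ⟨t, ht⟩ with hit
  -- key: the off-diagonal POVM entries are symmetric for these phases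
  have hsym : ∀ (i : Fin M) (k : Fin N),
      homPOVM nmax (x i.castSucc) (x i.succ) (2 * Real.pi * (k : ℕ) / N) it 0 =
      homPOVM nmax (x i.castSucc) (x i.succ) (2 * Real.pi * (k : ℕ) / N) 0 it := by
    intro i k
    simp only [homPOVM, Matrix.of_apply, hit, Fin.val_zero, Nat.cast_zero]
    have hθ : ((t : ℝ)) * (2 * Real.pi * (k : ℕ) / N) = (k : ℕ) * Real.pi := by
      field_simp
      push_cast [← h2t]
      ring
    have hexp1 : Complex.exp (Complex.I * (((t : ℕ) : ℂ) - 0) * ((2 * Real.pi * (k : ℕ) / N : ℝ) : ℂ))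
        = (-1 : ℂ) ^ (k : ℕ) := by
      have : Complex.I * (((t : ℕ) : ℂ) - 0) * ((2 * Real.pi * (k : ℕ) / N : ℝ) : ℂ)
          = ((k : ℕ) : ℂ) * ((Real.pi : ℂ) * Complex.I) := by
        rw [sub_zero]
        have := congrArg (fun r : ℝ => (r : ℂ)) hθ
        push_cast at this
        rw [show Complex.I * ((t : ℕ) : ℂ) * ((2 * Real.pi * (k : ℕ) / N : ℝ) : ℂ)
            = (((t : ℕ) : ℂ) * ((2 : ℂ) * (Real.pi : ℂ) * ((k : ℕ) : ℂ) / (N : ℂ))) * Complex.I by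
          push_cast; ring]
        rw [this]
        ring
      rw [this, Complex.exp_nat_mul, Complex.exp_pi_mul_I]
    have hexp2 : Complex.exp (Complex.I * (0 - ((t : ℕ) : ℂ)) * ((2 * Real.pi * (k : ℕ) / N : ℝ) : ℂ))
        = (-1 : ℂ) ^ (k : ℕ) := by
      have h : Complex.I * (0 - ((t : ℕ) : ℂ)) * ((2 * Real.pi * (k : ℕ) / N : ℝ) : ℂ)
          = -(Complex.I * (((t : ℕ) : ℂ) - 0) * ((2 * Real.pi * (k : ℕ) / N : ℝ) : ℂ)) := by ring
      rw [h, Complex.exp_neg, hexp1]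
      rw [← inv_pow, inv_neg, inv_one]
    rw [hexp1, hexp2, hermOverlap_comm]
  -- part 1
  have part1 : ∀ (i : Fin M) (k : Fin N),
      (twoLevelOuter nmax (N / 2) α β *
          homPOVM nmax (x i.castSucc) (x i.succ) (2 * Real.pi * (k : ℕ) / N)).trace =
      (twoLevelOuter nmax (N / 2) α (starRingEnd ℂ β) *
          homPOVM nmax (x i.castSucc) (x i.succ) (2 * Real.pi * (k : ℕ) / N)).trace := by
    intro i k
    rw [← htdef, trace_twoLevelOuter_mul t ht ht0, trace_twoLevelOuter_mul t ht ht0]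
    rw [Complex.conj_conj, ← hit, hsym i k]
    ring
  refine ⟨part1, fun hα hβ => ?_⟩
  have hαC : (α : ℂ) ≠ 0 := Complex.ofReal_ne_zero.mpr hα
  have hββ : starRingEnd ℂ β ≠ β := by
    intro h
    exact hβ ((Complex.conj_eq_iff_im).mp h)
  have hvβ0 : ∀ γ : ℂ, twoLevelVec nmax t α γ 0 = (α : ℂ) := by
    intro γ; simp [twoLevelVec]
  have hvβt : ∀ γ : ℂ, twoLevelVec nmax t α γ it = γ := by
    intro γ; simp [twoLevelVec, hit, ht0]
  constructor
  · intro h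
    have := congrArg (fun m => m 0 it) h
    simp only [twoLevelOuter, Matrix.vecMulVec_apply, hvβ0, hvβt, Complex.conj_conj] at this
    exact hββ (mul_left_cancel₀ hαC this)
  · intro hspan
    set D := twoLevelOuter nmax (N / 2) α β - twoLevelOuter nmax (N / 2) α (starRingEnd ℂ β)
      with hD
    set f : Matrix (Fin (nmax + 1)) (Fin (nmax + 1)) ℂ →ₗ[ℂ] ℂ :=
      (Matrix.traceLinearMap (Fin (nmax + 1)) ℂ ℂ).comp (LinearMap.mulLeft ℂ D) with hf
    have hrange : (Set.range fun p : Fin M × Fin N =>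
        homPOVM nmax (x p.1.castSucc) (x p.1.succ) (2 * Real.pi * (p.2 : ℕ) / N))
        ⊆ (LinearMap.ker f : Set _) := by
      rintro _ ⟨p, rfl⟩
      simp only [SetLike.mem_coe, LinearMap.mem_ker, hf, LinearMap.comp_apply,
        LinearMap.mulLeft_apply, Matrix.traceLinearMap_apply, hD, Matrix.sub_mul,
        Matrix.trace_sub]
      rw [part1 p.1 p.2, sub_self]
    have hker : LinearMap.ker f = ⊤ := by
      rw [eq_top_iff, ← hspan]
      exact Submodule.span_le.mpr hrange
    have hf0 : f = 0 := LinearMap.ker_eq_top.mp hker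
    have hE := congrArg (fun g => g (Matrix.single it 0 (1 : ℂ))) hf0
    simp only [hf, LinearMap.comp_apply, LinearMap.mulLeft_apply,
      Matrix.traceLinearMap_apply, LinearMap.zero_apply] at hE
    have htr : (D * Matrix.single it 0 (1 : ℂ)).trace = D 0 it := by
      rw [Matrix.trace]
      rw [Fintype.sum_eq_single (0 : Fin (nmax + 1)) (f := fun p => (D * Matrix.single it 0 (1:ℂ)).diag p)
        (by intro p hp
            simp only [Matrix.diag_apply, Matrix.mul_apply]
            apply Finset.sum_eq_zero
            intro q _
            rw [Matrix.single]
            simp [Ne.symm hp])]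
      simp only [Matrix.diag_apply, Matrix.mul_apply]
      rw [Fintype.sum_eq_single it (f := fun q => D 0 q * Matrix.single it 0 (1:ℂ) q 0)
        (by intro q hq
            rw [Matrix.single]
            simp only [Matrix.of_apply]
            rw [if_neg (by simp [Ne.symm hq])]
            simp)]
      rw [Matrix.single]
      simp
    rw [htr] at hE
    have hD0t : D 0 it = (α : ℂ) * (starRingEnd ℂ β - β) := by
      simp only [hD, Matrix.sub_apply, twoLevelOuter, Matrix.vecMulVec_apply, ← htdef,
        hvβ0, hvβt, Complex.conj_conj]
      ring
    rw [hD0t] at hE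
    rcases mul_eq_zero.mp hE with h | h
    · exact hαC h
    · exact hββ (sub_eq_zero.mp h)
end

section
/- For any phase θ ∈ ℝ and any bounded interval I ⊆ ℝ, the truncated homodyne POVM matrix Π(I, θ) is Hermitian and positive semidefinite. Moreover, if I_1, …, I_M ⊆ ℝ are pairwise disjoint bounded intervals, then Σ_{i=1}^{M} Π(I_i, θ) ≤ I_d in the Loewner order (i.e., I_d − Σ_i Π(I_i, θ) is positive semidefinite), where I_d is the (n_max+1) × (n_max+1) identity matrix. -/
/-! ### Auxiliary development -/

open Polynomial MeasureTheory Real Filter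

/-- Physicists' Hermite polynomials. -/
noncomputable def pH : ℕ → Polynomial ℝ
  | 0 => 1
  | n + 1 => C 2 * X * pH n - derivative (pH n)

lemma pH_succ (n : ℕ) : pH (n + 1) = C 2 * X * pH n - derivative (pH n) := rfl

lemma pH_natDegree_le (n : ℕ) : (pH n).natDegree ≤ n := by
  induction n with
  | zero => simp [pH]
  | succ n ih =>
    rw [pH_succ]
    refine (natDegree_sub_le _ _).trans (max_le ?_ ?_)
    · refine (natDegree_mul_le).trans ?_
      have : (C (2:ℝ) * X).natDegree ≤ 1 := by
        refine natDegree_mul_le.trans ?_; simp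
      omega
    · exact (natDegree_derivative_le _).trans (by omega)

lemma pH_coeff_self (n : ℕ) : (pH n).coeff n = 2 ^ n := by
  induction n with
  | zero => simp [pH]
  | succ n ih =>
    rw [pH_succ, coeff_sub]
    have h1 : (C (2:ℝ) * X * pH n).coeff (n + 1) = 2 * (pH n).coeff n := by
      rw [mul_assoc, coeff_C_mul, coeff_X_mul]
    have h2 : (derivative (pH n)).coeff (n + 1) = 0 := by
      apply coeff_eq_zero_of_natDegree_lt
      exact lt_of_le_of_lt (natDegree_derivative_le _) (by have := pH_natDegree_le n; omega)
    rw [h1, h2, ih]; ring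

lemma hasDerivAt_poly_gauss (p : ℝ[X]) (x : ℝ) :
    HasDerivAt (fun y => p.eval y * Real.exp (-y ^ 2))
      ((derivative p - C 2 * X * p).eval x * Real.exp (-x ^ 2)) x := by
  have hg : HasDerivAt (fun y : ℝ => Real.exp (-y ^ 2)) (-(2 * x) * Real.exp (-x ^ 2)) x := by
    have h1 : HasDerivAt (fun y : ℝ => -y ^ 2) (-(2 * x)) x := by
      simpa using (hasDerivAt_pow 2 x).fun_neg
    simpa [mul_comm] using h1.exp
  have := (p.hasDerivAt x).fun_mul hg
  refine this.congr_deriv ?_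
  simp [eval_mul]; ring

lemma iteratedDeriv_gauss (n : ℕ) :
    iteratedDeriv n (fun y => Real.exp (-y ^ 2)) =
      fun x => (-1 : ℝ) ^ n * (pH n).eval x * Real.exp (-x ^ 2) := by
  induction n with
  | zero => funext x; simp [pH]
  | succ n ih =>
    rw [iteratedDeriv_succ, ih]
    funext x
    have h : HasDerivAt (fun y => (-1 : ℝ) ^ n * ((pH n).eval y * Real.exp (-y ^ 2)))
        ((-1 : ℝ) ^ n * ((derivative (pH n) - C 2 * X * pH n).eval x * Real.exp (-x ^ 2))) x :=
      (hasDerivAt_poly_gauss (pH n) x).const_mul _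
    have h' : deriv (fun y => (-1 : ℝ) ^ n * ((pH n).eval y * Real.exp (-y ^ 2))) x
        = (-1 : ℝ) ^ n * ((derivative (pH n) - C 2 * X * pH n).eval x * Real.exp (-x ^ 2)) :=
      h.deriv
    have e : (fun y => (-1 : ℝ) ^ n * (pH n).eval y * Real.exp (-y ^ 2))
        = fun y => (-1 : ℝ) ^ n * ((pH n).eval y * Real.exp (-y ^ 2)) := by
      funext y; ring
    rw [e, h', pH_succ]
    simp [eval_mul, pow_succ]
    ring

lemma physHermite_eq (n : ℕ) (x : ℝ) : physHermite n x = (pH n).eval x := by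
  rw [physHermite, iteratedDeriv_gauss]
  have : Real.exp (x ^ 2) * Real.exp (-x ^ 2) = 1 := by
    rw [← Real.exp_add]; simp
  calc (-1:ℝ) ^ n * Real.exp (x ^ 2) * ((-1:ℝ) ^ n * (pH n).eval x * Real.exp (-x ^ 2))
      = ((-1:ℝ) ^ n * (-1:ℝ) ^ n) * (pH n).eval x * (Real.exp (x ^ 2) * Real.exp (-x ^ 2)) := by
        ring
    _ = (pH n).eval x := by rw [this, ← pow_add]; simp [pow_mul]

lemma integrable_poly_gauss (p : ℝ[X]) :
    Integrable (fun x => p.eval x * Real.exp (-x ^ 2)) := by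
  induction p using Polynomial.induction_on' with
  | add p q hp hq =>
    simpa only [eval_add, add_mul] using hp.fun_add hq
  | monomial n a =>
    have hn : (-1 : ℝ) < (n : ℝ) := lt_of_lt_of_le (by norm_num) (Nat.cast_nonneg n)
    have h := (integrable_rpow_mul_exp_neg_mul_sq one_pos hn).const_mul a
    simp only [Real.rpow_natCast, neg_mul, one_mul] at h
    simpa only [eval_monomial, mul_assoc] using h

lemma ibp_step (p q : ℝ[X]) :
    ∫ x : ℝ, p.eval x * ((C 2 * X * q - derivative q).eval x * Real.exp (-x ^ 2))
      = ∫ x : ℝ, (derivative p).eval x * (q.eval x * Real.exp (-x ^ 2)) := by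
  have key := MeasureTheory.integral_mul_deriv_eq_deriv_mul_of_integrable
    (u := fun x => p.eval x) (u' := fun x => (derivative p).eval x)
    (v := fun x => q.eval x * Real.exp (-x ^ 2))
    (v' := fun x => (derivative q - C 2 * X * q).eval x * Real.exp (-x ^ 2))
    (fun x _ => p.hasDerivAt x) (fun x _ => hasDerivAt_poly_gauss q x)
    ?_ ?_ ?_
  · have e1 : ∀ x : ℝ, p.eval x * ((C 2 * X * q - derivative q).eval x * Real.exp (-x ^ 2))
        = -(p.eval x * ((derivative q - C 2 * X * q).eval x * Real.exp (-x ^ 2))) := by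
      intro x; simp [eval_mul]; ring
    simp only [e1]
    rw [MeasureTheory.integral_neg, key, neg_neg]
  · have e : (fun x => p.eval x) * (fun x => (derivative q - C 2 * X * q).eval x
        * Real.exp (-x ^ 2)) = fun x => (p * (derivative q - C 2 * X * q)).eval x
        * Real.exp (-x ^ 2) := by
      funext x; simp [eval_mul]; ring
    rw [e]; exact integrable_poly_gauss _
  · have e : (fun x => (derivative p).eval x) * (fun x => q.eval x * Real.exp (-x ^ 2))
        = fun x => (derivative p * q).eval x * Real.exp (-x ^ 2) := by
      funext x; simp [eval_mul]; ring
    rw [e]; exact integrable_poly_gauss _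
  · have e : (fun x => p.eval x) * (fun x => q.eval x * Real.exp (-x ^ 2))
        = fun x => (p * q).eval x * Real.exp (-x ^ 2) := by
      funext x; simp [eval_mul]; ring
    rw [e]; exact integrable_poly_gauss _

lemma orth_aux (n : ℕ) (p : ℝ[X]) :
    ∫ x : ℝ, p.eval x * ((pH n).eval x * Real.exp (-x ^ 2))
      = ∫ x : ℝ, (derivative^[n] p).eval x * Real.exp (-x ^ 2) := by
  induction n generalizing p with
  | zero => simp [pH]
  | succ n ih =>
    rw [pH_succ, ibp_step p (pH n), ih (derivative p), ← Function.iterate_succ_apply]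

lemma iterate_derivative_pH_self (n : ℕ) :
    derivative^[n] (pH n) = C ((2 : ℝ) ^ n * n.factorial) := by
  have hdeg : (derivative^[n] (pH n)).natDegree = 0 := by
    have := natDegree_iterate_derivative (pH n) n
    have := pH_natDegree_le n
    omega
  have hco : (derivative^[n] (pH n)).coeff 0 = 2 ^ n * n.factorial := by
    rw [coeff_iterate_derivative]
    simp [Nat.descFactorial_self, pH_coeff_self, mul_comm]
  rw [eq_C_of_natDegree_eq_zero hdeg, hco]

lemma hermite_orth (m n : ℕ) :
    ∫ x : ℝ, (pH m).eval x * ((pH n).eval x * Real.exp (-x ^ 2))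
      = if m = n then 2 ^ n * n.factorial * Real.sqrt Real.pi else 0 := by
  have gauss : ∫ x : ℝ, Real.exp (-x ^ 2) = Real.sqrt Real.pi := by
    have := integral_gaussian 1
    simpa using this
  rcases lt_trichotomy m n with h | h | h
  · rw [orth_aux n (pH m), if_neg h.ne]
    have : derivative^[n] (pH m) = 0 :=
      iterate_derivative_eq_zero (lt_of_le_of_lt (pH_natDegree_le m) h)
    simp [this]
  · subst h
    rw [orth_aux m (pH m), if_pos rfl, iterate_derivative_pH_self]
    simp only [eval_C]
    rw [MeasureTheory.integral_const_mul, gauss]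
  · rw [if_neg h.ne']
    have e : ∀ x : ℝ, (pH m).eval x * ((pH n).eval x * Real.exp (-x ^ 2))
        = (pH n).eval x * ((pH m).eval x * Real.exp (-x ^ 2)) := by intro x; ring
    simp only [e]
    rw [orth_aux m (pH n)]
    have : derivative^[m] (pH n) = 0 :=
      iterate_derivative_eq_zero (lt_of_le_of_lt (pH_natDegree_le n) h)
    simp [this]

/-- Normalization constant. -/
noncomputable def cnorm (n : ℕ) : ℝ :=
  (Real.sqrt (2 ^ n * n.factorial * Real.sqrt Real.pi))⁻¹

lemma cnorm_pos (n : ℕ) : 0 < cnorm n := by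
  have : (0:ℝ) < 2 ^ n * n.factorial * Real.sqrt Real.pi := by
    have := Real.sqrt_pos.2 Real.pi_pos
    positivity
  exact inv_pos.2 (Real.sqrt_pos.2 this)

/-- Normalized Hermite function. -/
noncomputable def hfun (n : ℕ) (x : ℝ) : ℝ :=
  cnorm n * ((pH n).eval x * Real.exp (-x ^ 2 / 2))

lemma hfun_mul (m n : ℕ) (x : ℝ) :
    hfun m x * hfun n x
      = cnorm m * cnorm n * ((pH m).eval x * ((pH n).eval x * Real.exp (-x ^ 2))) := by
  have he : Real.exp (-x ^ 2 / 2) * Real.exp (-x ^ 2 / 2) = Real.exp (-x ^ 2) := by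
    rw [← Real.exp_add]; congr 1; ring
  rw [hfun, hfun]
  calc cnorm m * (eval x (pH m) * Real.exp (-x ^ 2 / 2)) *
        (cnorm n * (eval x (pH n) * Real.exp (-x ^ 2 / 2)))
      = cnorm m * cnorm n * (eval x (pH m) * (eval x (pH n) *
          (Real.exp (-x ^ 2 / 2) * Real.exp (-x ^ 2 / 2)))) := by ring
    _ = _ := by rw [he]

lemma integrable_hfun_mul (m n : ℕ) :
    MeasureTheory.Integrable (fun x => hfun m x * hfun n x) := by
  simp only [hfun_mul]
  have e : (fun x => cnorm m * cnorm n * ((pH m).eval x * ((pH n).eval x * Real.exp (-x ^ 2))))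
      = fun x => cnorm m * cnorm n * ((pH m * pH n).eval x * Real.exp (-x ^ 2)) := by
    funext x; rw [eval_mul]; ring
  rw [e]
  exact (integrable_poly_gauss _).const_mul _

lemma hfun_orthonormal (m n : ℕ) :
    ∫ x : ℝ, hfun m x * hfun n x = if m = n then 1 else 0 := by
  simp only [hfun_mul]
  rw [MeasureTheory.integral_const_mul, hermite_orth]
  split_ifs with h
  · subst h
    have hK : (0:ℝ) < 2 ^ m * m.factorial * Real.sqrt Real.pi := by
      have := Real.sqrt_pos.2 Real.pi_pos
      positivity
    rw [cnorm, ← mul_inv, Real.mul_self_sqrt hK.le]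
    exact inv_mul_cancel₀ hK.ne'
  · rw [mul_zero]

lemma cnorm_mul (m n : ℕ) :
    (Real.sqrt (2 ^ (m + n) * m.factorial * n.factorial * Real.pi))⁻¹ = cnorm m * cnorm n := by
  have hπ : Real.sqrt Real.pi * Real.sqrt Real.pi = Real.pi :=
    Real.mul_self_sqrt Real.pi_pos.le
  rw [cnorm, cnorm, ← mul_inv, ← Real.sqrt_mul (by positivity)]
  congr 1
  congr 1
  symm
  calc (2:ℝ) ^ m * m.factorial * Real.sqrt Real.pi * (2 ^ n * n.factorial * Real.sqrt Real.pi)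
      = 2 ^ m * 2 ^ n * m.factorial * n.factorial * (Real.sqrt Real.pi * Real.sqrt Real.pi) := by
        ring
    _ = 2 ^ (m + n) * m.factorial * n.factorial * Real.pi := by rw [hπ, ← pow_add]

lemma hermOverlap_eq (m n : ℕ) (u v : ℝ) :
    hermOverlap m n u v = ∫ x in u..v, hfun m x * hfun n x := by
  rw [hermOverlap, cnorm_mul, ← intervalIntegral.integral_const_mul]
  refine intervalIntegral.integral_congr fun x _ => ?_
  rw [hfun_mul, physHermite_eq, physHermite_eq]
  ring

lemma hermOverlap_symm (m n : ℕ) (u v : ℝ) : hermOverlap n m u v = hermOverlap m n u v := by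
  rw [hermOverlap_eq, hermOverlap_eq]
  exact intervalIntegral.integral_congr fun x _ => mul_comm _ _

open Complex in
lemma quad_expand (d : ℕ) (w : Fin d → ℂ) (s : Set ℝ) :
    ∑ m : Fin d, ∑ n : Fin d, (w m * (starRingEnd ℂ) (w n)) *
        ((∫ x in s, hfun m.1 x * hfun n.1 x : ℝ) : ℂ)
      = ((∫ x in s, Complex.normSq (∑ k : Fin d, w k * (hfun k.1 x : ℂ)) : ℝ) : ℂ) := by
  have hint : ∀ m n : Fin d, MeasureTheory.IntegrableOn
      (fun x => (w m * (starRingEnd ℂ) (w n)) * ((hfun m.1 x * hfun n.1 x : ℝ) : ℂ)) s := by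
    intro m n
    exact ((integrable_hfun_mul m.1 n.1).integrableOn.ofReal).const_mul _
  have hpt : ∀ x : ℝ, ((Complex.normSq (∑ k : Fin d, w k * (hfun k.1 x : ℂ)) : ℝ) : ℂ)
      = ∑ m : Fin d, ∑ n : Fin d,
          (w m * (starRingEnd ℂ) (w n)) * ((hfun m.1 x * hfun n.1 x : ℝ) : ℂ) := by
    intro x
    rw [← Complex.mul_conj, map_sum, Finset.sum_mul_sum]
    refine Finset.sum_congr rfl fun m _ => Finset.sum_congr rfl fun n _ => ?_
    rw [map_mul, Complex.conj_ofReal]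
    push_cast
    ring
  calc ∑ m : Fin d, ∑ n : Fin d, (w m * (starRingEnd ℂ) (w n)) *
        ((∫ x in s, hfun m.1 x * hfun n.1 x : ℝ) : ℂ)
      = ∑ m : Fin d, ∑ n : Fin d,
          ∫ x in s, (w m * (starRingEnd ℂ) (w n)) * ((hfun m.1 x * hfun n.1 x : ℝ) : ℂ) := by
        refine Finset.sum_congr rfl fun m _ => Finset.sum_congr rfl fun n _ => ?_
        rw [MeasureTheory.integral_const_mul]
        congr 1
        exact integral_ofReal.symm
    _ = ∫ x in s, ∑ m : Fin d, ∑ n : Fin d,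
          (w m * (starRingEnd ℂ) (w n)) * ((hfun m.1 x * hfun n.1 x : ℝ) : ℂ) := by
        rw [MeasureTheory.integral_finset_sum _ fun m _ =>
          MeasureTheory.integrable_finset_sum _ fun n _ => hint m n]
        exact Finset.sum_congr rfl fun m _ =>
          (MeasureTheory.integral_finset_sum _ fun n _ => hint m n).symm
    _ = ∫ x in s, ((Complex.normSq (∑ k : Fin d, w k * (hfun k.1 x : ℂ)) : ℝ) : ℂ) :=
        MeasureTheory.integral_congr_ae (Filter.Eventually.of_forall fun x => (hpt x).symm)
    _ = _ := integral_ofReal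

lemma integrable_normSq (d : ℕ) (w : Fin d → ℂ) :
    MeasureTheory.Integrable
      (fun x => Complex.normSq (∑ k : Fin d, w k * (hfun k.1 x : ℂ))) := by
  have hpt : ∀ x : ℝ, Complex.normSq (∑ k : Fin d, w k * (hfun k.1 x : ℂ))
      = ∑ m : Fin d, ∑ n : Fin d,
          (w m * (starRingEnd ℂ) (w n)).re * (hfun m.1 x * hfun n.1 x) := by
    intro x
    have h : ((Complex.normSq (∑ k : Fin d, w k * (hfun k.1 x : ℂ)) : ℝ) : ℂ)
        = ∑ m : Fin d, ∑ n : Fin d,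
            (w m * (starRingEnd ℂ) (w n)) * ((hfun m.1 x * hfun n.1 x : ℝ) : ℂ) := by
      rw [← Complex.mul_conj, map_sum, Finset.sum_mul_sum]
      refine Finset.sum_congr rfl fun m _ => Finset.sum_congr rfl fun n _ => ?_
      rw [map_mul, Complex.conj_ofReal]
      push_cast
      ring
    have := congrArg Complex.re h
    simpa [Complex.ofReal_re] using this
  simp only [hpt]
  exact MeasureTheory.integrable_finset_sum _ fun m _ =>
    MeasureTheory.integrable_finset_sum _ fun n _ => (integrable_hfun_mul m.1 n.1).const_mul _

open Complex in
lemma conj_exp_phase (n : ℕ) (θ : ℝ) :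
    (starRingEnd ℂ) (Complex.exp (Complex.I * (n : ℂ) * (θ : ℂ)))
      = (Complex.exp (Complex.I * (n : ℂ) * (θ : ℂ)))⁻¹ := by
  rw [← Complex.exp_conj, ← Complex.exp_neg]
  congr 1
  rw [map_mul, map_mul, Complex.conj_I, Complex.conj_ofReal, map_natCast]
  ring

open Complex Matrix in
lemma quad_povm (nmax : ℕ) (θ u v : ℝ) (huv : u ≤ v) (z : Fin (nmax + 1) → ℂ) :
    dotProduct (star z) (homPOVM nmax u v θ *ᵥ z)
      = ((∫ x in Set.Ioc u v, Complex.normSq (∑ k : Fin (nmax + 1),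
          ((starRingEnd ℂ) (z k) * Complex.exp (Complex.I * ((k : ℕ) : ℂ) * (θ : ℂ)))
            * (hfun k.1 x : ℂ)) : ℝ) : ℂ) := by
  rw [← quad_expand (nmax + 1)
    (fun k => (starRingEnd ℂ) (z k) * Complex.exp (Complex.I * ((k : ℕ) : ℂ) * (θ : ℂ)))
    (Set.Ioc u v)]
  simp only [dotProduct, Matrix.mulVec, homPOVM, Matrix.of_apply, Pi.star_apply,
    Complex.star_def, Finset.mul_sum]
  refine Finset.sum_congr rfl fun m _ => Finset.sum_congr rfl fun n _ => ?_
  have hR : hermOverlap m.1 n.1 u v = ∫ x in Set.Ioc u v, hfun m.1 x * hfun n.1 x := by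
    rw [hermOverlap_eq, intervalIntegral.integral_of_le huv]
  have he : Complex.exp (Complex.I * (((m : ℕ) : ℂ) - ((n : ℕ) : ℂ)) * (θ : ℂ))
      = Complex.exp (Complex.I * ((m : ℕ) : ℂ) * (θ : ℂ))
        * (Complex.exp (Complex.I * ((n : ℕ) : ℂ) * (θ : ℂ)))⁻¹ := by
    rw [show Complex.I * (((m : ℕ) : ℂ) - ((n : ℕ) : ℂ)) * (θ : ℂ)
        = Complex.I * ((m : ℕ) : ℂ) * (θ : ℂ) - Complex.I * ((n : ℕ) : ℂ) * (θ : ℂ) from by ring,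
      Complex.exp_sub, div_eq_mul_inv]
  rw [hR, he, _root_.map_mul, Complex.conj_conj, conj_exp_phase]
  ring

open Complex in
lemma sum_normSq_eq (nmax : ℕ) (θ : ℝ) (z : Fin (nmax + 1) → ℂ) :
    ((∑ m : Fin (nmax + 1), Complex.normSq (z m) : ℝ) : ℂ)
      = ((∫ x : ℝ, Complex.normSq (∑ k : Fin (nmax + 1),
          ((starRingEnd ℂ) (z k) * Complex.exp (Complex.I * ((k : ℕ) : ℂ) * (θ : ℂ)))
            * (hfun k.1 x : ℂ)) : ℝ) : ℂ) := by
  rw [← MeasureTheory.setIntegral_univ]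
  rw [← quad_expand (nmax + 1)
    (fun k => (starRingEnd ℂ) (z k) * Complex.exp (Complex.I * ((k : ℕ) : ℂ) * (θ : ℂ)))
    Set.univ]
  have horth : ∀ m n : Fin (nmax + 1),
      (∫ x in Set.univ, hfun m.1 x * hfun n.1 x) = if m = n then (1 : ℝ) else 0 := by
    intro m n
    rw [MeasureTheory.setIntegral_univ, hfun_orthonormal]
    simp [Fin.val_inj]
  have hns : ∀ m : Fin (nmax + 1),
      Complex.normSq ((starRingEnd ℂ) (z m) * Complex.exp (Complex.I * ((m : ℕ) : ℂ) * (θ : ℂ)))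
        = Complex.normSq (z m) := by
    intro m
    have habs : ‖Complex.exp (Complex.I * ((m : ℕ) : ℂ) * (θ : ℂ))‖ = 1 := by
      rw [Complex.norm_exp]
      simp
    have h1 : Complex.normSq (Complex.exp (Complex.I * ((m : ℕ) : ℂ) * (θ : ℂ))) = 1 := by
      rw [Complex.normSq_eq_norm_sq, habs, one_pow]
    rw [Complex.normSq_mul, Complex.normSq_conj, h1, mul_one]
  rw [Finset.sum_congr rfl fun m (_ : m ∈ Finset.univ) =>
    Finset.sum_congr rfl fun n (_ : n ∈ Finset.univ) => by rw [horth m n]]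
  push_cast
  simp only [apply_ite (Complex.ofReal), Complex.ofReal_one, Complex.ofReal_zero, mul_ite,
    mul_one, mul_zero, Finset.sum_ite_eq, Finset.sum_ite_eq', Finset.mem_univ, if_true]
  rw [Finset.sum_congr rfl fun m (_ : m ∈ Finset.univ) => Complex.mul_conj _]
  rw [Finset.sum_congr rfl fun m (_ : m ∈ Finset.univ) => congrArg Complex.ofReal (hns m)]

open Complex Matrix in
lemma isHermitian_homPOVM (nmax : ℕ) (u v θ : ℝ) : (homPOVM nmax u v θ).IsHermitian := by
  show (homPOVM nmax u v θ)ᴴ = homPOVM nmax u v θ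
  ext m n
  rw [Matrix.conjTranspose_apply]
  show star (Complex.exp (Complex.I * (((n : ℕ) : ℂ) - ((m : ℕ) : ℂ)) * (θ : ℂ)) *
      (hermOverlap n m u v : ℂ))
    = Complex.exp (Complex.I * (((m : ℕ) : ℂ) - ((n : ℕ) : ℂ)) * (θ : ℂ)) *
      (hermOverlap m n u v : ℂ)
  rw [Complex.star_def, _root_.map_mul, Complex.conj_ofReal, hermOverlap_symm]
  congr 1
  rw [← Complex.exp_conj]
  congr 1
  rw [_root_.map_mul, _root_.map_mul, map_sub, Complex.conj_I, Complex.conj_ofReal,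
    map_natCast, map_natCast]
  ring

open Complex Matrix in
lemma dot_star_self (d : ℕ) (z : Fin d → ℂ) :
    dotProduct (star z) z = ((∑ m : Fin d, Complex.normSq (z m) : ℝ) : ℂ) := by
  simp only [dotProduct, Pi.star_apply, Complex.star_def]
  rw [Finset.sum_congr rfl fun m (_ : m ∈ Finset.univ) => by rw [mul_comm, Complex.mul_conj]]
  push_cast
  rfl

open scoped ComplexOrder in
open Complex Matrix in
lemma homPOVM_part1 (nmax : ℕ) (θ u v : ℝ) (huv : u ≤ v) :
    (homPOVM nmax u v θ).PosSemidef := by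
  refine Matrix.posSemidef_iff_dotProduct_mulVec.2 ⟨isHermitian_homPOVM nmax u v θ, fun z => ?_⟩
  rw [quad_povm nmax θ u v huv z]
  exact Complex.zero_le_real.2 (MeasureTheory.integral_nonneg fun x => Complex.normSq_nonneg _)

open scoped ComplexOrder in
open Complex Matrix in
lemma homPOVM_part2 (nmax : ℕ) (θ : ℝ) (M : ℕ) (u v : Fin M → ℝ) (hu : ∀ i, u i ≤ v i)
    (hdisj : Pairwise fun i j => Disjoint (Set.Ico (u i) (v i)) (Set.Ico (u j) (v j))) :
    ((1 : Matrix (Fin (nmax + 1)) (Fin (nmax + 1)) ℂ) -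
      ∑ i, homPOVM nmax (u i) (v i) θ).PosSemidef := by
  rw [Matrix.posSemidef_iff_dotProduct_mulVec]
  constructor
  · refine Matrix.isHermitian_one.sub ?_
    show (∑ i, homPOVM nmax (u i) (v i) θ)ᴴ = _
    rw [Matrix.conjTranspose_sum]
    exact Finset.sum_congr rfl fun i _ => isHermitian_homPOVM nmax (u i) (v i) θ
  · intro z
    have hsplit : dotProduct (star z)
          ((1 - ∑ i, homPOVM nmax (u i) (v i) θ) *ᵥ z)
        = dotProduct (star z) z
          - ∑ i, dotProduct (star z) (homPOVM nmax (u i) (v i) θ *ᵥ z) := by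
      rw [Matrix.sub_mulVec, dotProduct_sub, Matrix.one_mulVec]
      congr 1
      have hmv : (∑ i, homPOVM nmax (u i) (v i) θ) *ᵥ z
          = ∑ i, (homPOVM nmax (u i) (v i) θ) *ᵥ z := by
        funext m
        simp only [Matrix.mulVec, dotProduct, Finset.sum_apply, Matrix.sum_apply,
          Finset.sum_mul]
        exact Finset.sum_comm
      rw [hmv]
      simp only [dotProduct, Finset.sum_apply, Finset.mul_sum]
      exact Finset.sum_comm
    rw [hsplit, dot_star_self, sum_normSq_eq nmax θ z,
      Finset.sum_congr rfl fun i (_ : i ∈ Finset.univ) => quad_povm nmax θ (u i) (v i) (hu i) z]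
    have key : ∑ i, (∫ x in Set.Ioc (u i) (v i), Complex.normSq (∑ k : Fin (nmax + 1),
          ((starRingEnd ℂ) (z k) * Complex.exp (Complex.I * ((k : ℕ) : ℂ) * (θ : ℂ)))
            * (hfun k.1 x : ℂ)))
        ≤ ∫ x : ℝ, Complex.normSq (∑ k : Fin (nmax + 1),
          ((starRingEnd ℂ) (z k) * Complex.exp (Complex.I * ((k : ℕ) : ℂ) * (θ : ℂ)))
            * (hfun k.1 x : ℂ)) := by
      rw [Finset.sum_congr rfl fun i (_ : i ∈ Finset.univ) =>
        MeasureTheory.integral_Ioc_eq_integral_Ioo]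
      rw [← MeasureTheory.integral_iUnion_fintype (fun i => measurableSet_Ioo)
        (fun i j hij => ((hdisj hij).mono Set.Ioo_subset_Ico_self Set.Ioo_subset_Ico_self))
        (fun i => (integrable_normSq (nmax + 1) _).integrableOn)]
      exact MeasureTheory.setIntegral_le_integral (integrable_normSq (nmax + 1) _)
        (Filter.Eventually.of_forall fun x => Complex.normSq_nonneg _)
    have hcast : ((∫ x : ℝ, Complex.normSq (∑ k : Fin (nmax + 1),
          ((starRingEnd ℂ) (z k) * Complex.exp (Complex.I * ((k : ℕ) : ℂ) * (θ : ℂ)))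
            * (hfun k.1 x : ℂ)) : ℝ) : ℂ)
        - ∑ i, ((∫ x in Set.Ioc (u i) (v i), Complex.normSq (∑ k : Fin (nmax + 1),
          ((starRingEnd ℂ) (z k) * Complex.exp (Complex.I * ((k : ℕ) : ℂ) * (θ : ℂ)))
            * (hfun k.1 x : ℂ)) : ℝ) : ℂ)
        = (((∫ x : ℝ, Complex.normSq (∑ k : Fin (nmax + 1),
          ((starRingEnd ℂ) (z k) * Complex.exp (Complex.I * ((k : ℕ) : ℂ) * (θ : ℂ)))
            * (hfun k.1 x : ℂ)))
          - ∑ i, ∫ x in Set.Ioc (u i) (v i), Complex.normSq (∑ k : Fin (nmax + 1),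
          ((starRingEnd ℂ) (z k) * Complex.exp (Complex.I * ((k : ℕ) : ℂ) * (θ : ℂ)))
            * (hfun k.1 x : ℂ)) : ℝ) : ℂ) := by
      push_cast
      ring
    rw [hcast]
    exact Complex.zero_le_real.2 (sub_nonneg.2 key)


open scoped ComplexOrder

/-- Each truncated homodyne POVM matrix `Π([u,v), θ)` is Hermitian positive
semidefinite, and for pairwise disjoint bounded intervals `I_i = [u_i, v_i)` the sum
`Σ_i Π(I_i, θ)` is bounded above by the identity in the Loewner order. -/
theorem homPOVM_posSemidef_and_sum_le_one (nmax : ℕ) (θ : ℝ) :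
    (∀ u v : ℝ, u ≤ v → (homPOVM nmax u v θ).PosSemidef) ∧
    (∀ (M : ℕ) (u v : Fin M → ℝ), (∀ i, u i ≤ v i) →
      (Pairwise fun i j => Disjoint (Set.Ico (u i) (v i)) (Set.Ico (u j) (v j))) →
      ((1 : Matrix (Fin (nmax + 1)) (Fin (nmax + 1)) ℂ) -
        ∑ i, homPOVM nmax (u i) (v i) θ).PosSemidef) :=
  ⟨fun u v huv => homPOVM_part1 nmax θ u v huv,
   fun M u v hu hdisj => homPOVM_part2 nmax θ M u v hu hdisj⟩
end
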